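/- Let n and r be distinct prime numbers with r > 2, and let S = S(n, r). Then the number of affine sets A ∈ 𝔸 fixed under σ^r (i.e., with pointwise image σ^r(A) = A) is (q^{r−1} − 1)/(q − 1). -/

import Mathlib

open Polynomial

/-- The affine set `A(α) = {a α + b : a, b ∈ K, a ≠ 0}`. -/
def affineSet (K : Type*) {L : Type*} [Field K] [Field L] [Algebra K L] (α : L) : Set L :=
  {β | ∃ a b : K, a ≠ 0 ∧ β = algebraMap K L a * α + algebraMap K L b}

/-- The affine sets `A(α)` for `α` of degree `r` over `K` that are fixed (as sets, pointwise
image) by the map `x ↦ x ^ m`. -/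
def fixedAffineSets (K L : Type*) [Field K] [Field L] [Algebra K L] (r m : ℕ) :
    Set (Set L) :=
  {A | (∃ α : L, (minpoly K α).natDegree = r ∧ A = affineSet K α) ∧
    (fun x : L => x ^ m) '' A = A}

/-!
Write `τ x = x ^ q ^ r`. Its fixed points form `F_{q^r}` in `L` and, since `gcd (n, r) = 1`,
only `F_q` in `K`. The affine set `A(α)` is `τ`-stable exactly when `τ α = a α + b` with
`a, b ∈ K`. Iterating `n` times (`τ^n = id` on `L`) gives `∏ τ^i a = 1`, so by Hilbert 90 for
`τ` acting on `Kˣ` we get `a = c / τ c`; then `τ (c α) = c α + b'` where `b'` has trace zero,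
and additive Hilbert 90 writes `b' = d - τ d`, so `c α + d ∈ A(α)` is fixed by `τ`. Both
Hilbert 90s follow by counting: the kernel of `x ↦ x / τ x` (resp. `x ↦ x - τ x`) consists of
the `q - 1` (resp. `q`) fixed points of `τ`, and there are at most `(q^n - 1)/(q - 1)`
(resp. `q^(n-1)`) elements of norm one (resp. trace zero). Hence the stable affine sets are the `A(β)` with `β ∈ F_{q^r} \ F_q`, and
each of them contains exactly the `q (q - 1)` such elements `c β + d`, `c ∈ F_qˣ`, `d ∈ F_q`.
-/

open Finset Function

theorem ncard_setOf_eval_eq_zero_le {F : Type*} [Field F] {P : F[X]} (hP : P ≠ 0) :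
    {x : F | P.eval x = 0}.ncard ≤ P.natDegree :=
  le_trans (Set.ncard_le_ncard (fun x hx => by simpa [mem_rootSet, hP] using hx)
    (P.rootSet_finite F)) (P.ncard_rootSet_le F)

theorem ncard_setOf_pow_eq_self_le {F : Type*} [Field F] {m : ℕ} (hm : 1 < m) :
    {x : F | x ^ m = x}.ncard ≤ m := by
  have hP : (X ^ m - X : F[X]) ≠ 0 := FiniteField.X_pow_card_sub_X_ne_zero F hm
  convert ncard_setOf_eval_eq_zero_le hP using 1
  · simp [sub_eq_zero]
  · exact (FiniteField.X_pow_card_sub_X_natDegree_eq F hm).symm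

theorem ncard_setOf_sum_pow_pow_eq_zero_le {F : Type*} [Field F] {q n : ℕ} (hq : 1 < q)
    (hn : n ≠ 0) : {x : F | ∑ j ∈ range n, x ^ q ^ j = 0}.ncard ≤ q ^ (n - 1) := by
  set P : F[X] := ∑ j ∈ range n, X ^ q ^ j
  have hcoeff : P.coeff (q ^ (n - 1)) = 1 := by
    simp only [P, finsetSum_coeff, coeff_X_pow, (Nat.pow_right_injective hq).eq_iff]
    simp [Nat.sub_lt (Nat.pos_of_ne_zero hn) one_pos]
  have hdeg : P.natDegree ≤ q ^ (n - 1) :=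
    natDegree_sum_le_of_forall_le _ _ fun j hj => by
      rw [natDegree_X_pow]
      exact Nat.pow_le_pow_right (by omega) (by simp at hj; omega)
  have hP : P ≠ 0 := fun h => by simp [h] at hcoeff
  refine le_trans (le_of_eq ?_) ((ncard_setOf_eval_eq_zero_le hP).trans hdeg)
  simp [P, eval_finsetSum]

theorem natCard_rootsOfUnity_of_dvd {F : Type*} [Field F] [Finite F] {d : ℕ}
    (hd : d ∣ Nat.card F - 1) : Nat.card (rootsOfUnity d F) = d := by
  have hF : NeZero (Nat.card F - 1) := ⟨by have := Finite.one_lt_card (α := F); omega⟩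
  have : HasEnoughRootsOfUnity F (Nat.card F - 1) := by
    refine HasEnoughRootsOfUnity.of_card_le (le_of_eq ?_)
    rw [← Nat.card_units, ← Nat.card_univ]
    congr
    ext u
    simp [mem_rootsOfUnity, pow_card_eq_one']
  have := HasEnoughRootsOfUnity.of_dvd F hd
  have : NeZero d := ⟨by rintro rfl; exact hF.out (zero_dvd_iff.mp hd)⟩
  exact HasEnoughRootsOfUnity.natCard_rootsOfUnity F d

theorem ncard_le_of_forall_pow_eq_one {R : Type*} [CommRing R] [IsDomain R] {k : ℕ} [NeZero k]
    {s : Set Rˣ} (h : ∀ u ∈ s, u ^ k = 1) : s.ncard ≤ k :=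
  (Set.ncard_le_ncard (t := (rootsOfUnity k R : Set Rˣ)) h
    (Set.finite_coe_iff.1 (inferInstanceAs (Finite (rootsOfUnity k R))))).trans
    ((Nat.card_coe_set_eq _).symm.trans_le (card_rootsOfUnity R k))

theorem ncard_setOf_pow_eq_self {F : Type*} [Field F] [Finite F] {m : ℕ} (hm : 1 < m)
    (hdvd : m - 1 ∣ Nat.card F - 1) : {x : F | x ^ m = x}.ncard = m := by
  have : NeZero (m - 1) := ⟨by omega⟩
  have hset : {x : F | x ^ m = x} = insert 0 {x | x ^ (m - 1) = 1} := by
    ext x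
    rcases eq_or_ne x 0 with rfl | hx
    · simp [zero_pow (by omega : m ≠ 0)]
    · simp [hx, ← pow_sub_one_mul (by omega : m ≠ 0)]
  rw [hset, Set.ncard_insert_of_notMem (by simp [zero_pow (NeZero.ne (m - 1))]),
    ← Units.val_set_image_rootsOfUnity, Set.ncard_image_of_injective _ Units.val_injective,
    ← Nat.card_coe_set_eq, SetLike.coe_sort_coe, natCard_rootsOfUnity_of_dvd hdvd]
  omega

section PowPow

variable {M : Type*} [Monoid M] {q : ℕ} {x : M}

theorem pow_pow_eq_self_of_pow_eq_self (hx : x ^ q = x) (m : ℕ) : x ^ q ^ m = x := by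
  simpa [pow_iterate] using (IsFixedPt.iterate (f := (· ^ q)) hx m).eq

theorem pow_eq_self_of_pow_pow_eq_self {a b : ℕ} (ha : x ^ q ^ a = x) (hb : x ^ q ^ b = x)
    (hab : a.Coprime b) : x ^ q = x := by
  have h : IsPeriodicPt (· ^ q) (a.gcd b) x :=
    IsPeriodicPt.gcd (by simpa [IsPeriodicPt, IsFixedPt, pow_iterate] using ha)
      (by simpa [IsPeriodicPt, IsFixedPt, pow_iterate] using hb)
  simpa [hab, IsPeriodicPt, IsFixedPt] using h

theorem periodic_pow_pow {k : ℕ} (hx : x ^ q ^ k = x) : Periodic (fun j => x ^ q ^ j) k :=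
  fun j => by simp only [pow_add, pow_mul', hx]

end PowPow

section FiniteField

variable {F : Type*} [Field F] [Fintype F] {q k : ℕ}

theorem ne_zero_of_card_eq_pow (hF : Fintype.card F = q ^ k) : k ≠ 0 := by
  rintro rfl
  exact (Fintype.one_lt_card (α := F)).ne' (by simpa using hF)

theorem one_lt_of_card_eq_pow (hF : Fintype.card F = q ^ k) : 1 < q :=
  (Nat.one_lt_pow_iff (ne_zero_of_card_eq_pow hF)).1 (hF ▸ Fintype.one_lt_card)

theorem pow_pow_card_eq_self (hF : Fintype.card F = q ^ k) (x : F) : x ^ q ^ k = x :=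
  hF ▸ FiniteField.pow_card x

theorem exists_ringHom_eq_pow_pow (hF : Fintype.card F = q ^ k) (m : ℕ) :
    ∃ σ : F →+* F, ∀ x, σ x = x ^ q ^ m := by
  obtain ⟨p, _, j, hp, hj⟩ := FiniteField.card' F
  obtain ⟨i, -, rfl⟩ := (Nat.dvd_prime_pow hp).1
    (hj ▸ hF ▸ dvd_pow_self q (ne_zero_of_card_eq_pow hF))
  have : ExpChar F p := ExpChar.prime hp
  exact ⟨iterateFrobenius F p (i * m), fun x => by rw [iterateFrobenius_def, pow_mul]⟩

end FiniteField

@[to_additive]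
theorem exists_div_apply_eq_of_prod_iterate_eq_one {G : Type*} [CommGroup G] [Finite G]
    (τ : G →* G) {n : ℕ} (hτ : ∀ x, τ^[n] x = x)
    (hcard : {x | τ x = x}.ncard * {x | ∏ i ∈ range n, τ^[i] x = 1}.ncard ≤ Nat.card G)
    {a : G} (ha : ∏ i ∈ range n, τ^[i] a = 1) : ∃ c, c / τ c = a := by
  let f : G →* G := MonoidHom.id G / τ
  have hker : (f.ker : Set G) = {x | τ x = x} := by
    ext x
    exact div_eq_one.trans eq_comm
  have hrange : (f.range : Set G) ⊆ {x | ∏ i ∈ range n, τ^[i] x = 1} := by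
    rintro _ ⟨c, rfl⟩
    have hstep : ∀ i, τ^[i] (f c) = τ^[i] c / τ^[i + 1] c := fun i => by
      rw [MonoidHom.div_apply, iterate_map_div, iterate_succ_apply]; rfl
    simp only [Set.mem_ofPred_eq, hstep, prod_range_div', iterate_zero_apply, hτ, div_self']
  have hcard_range : Nat.card G ≤ (f.range : Set G).ncard * {x | τ x = x}.ncard := by
    rw [← hker, ← Nat.card_coe_set_eq, ← Nat.card_coe_set_eq, SetLike.coe_sort_coe,
      SetLike.coe_sort_coe, ← Subgroup.index_ker, mul_comm, Subgroup.card_mul_index]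
  have hfix_pos : 0 < {x | τ x = x}.ncard :=
    (Set.ncard_pos (Set.toFinite _)).2 ⟨1, map_one τ⟩
  have heq := Set.eq_of_subset_of_ncard_le hrange (by
    rw [mul_comm] at hcard
    exact Nat.le_of_mul_le_mul_right (hcard.trans hcard_range) hfix_pos)
  obtain ⟨c, hc⟩ : a ∈ (f.range : Set G) := heq ▸ ha
  exact ⟨c, hc⟩

@[to_additive Function.Periodic.sum_range_mul_left]
theorem Function.Periodic.prod_range_mul_left {M : Type*} [CommMonoid M] {f : ℕ → M} {n r : ℕ}
    (hf : Periodic f n) (hr : r.Coprime n) :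
    ∏ i ∈ range n, f (r * i) = ∏ i ∈ range n, f i := by
  rcases Nat.eq_zero_or_pos n with rfl | hn
  · simp
  have hinj : Set.InjOn (fun i => r * i % n) (range n) := by
    intro i hi j hj hij
    have := Nat.ModEq.cancel_left_of_coprime hr.symm hij
    rwa [Nat.ModEq, Nat.mod_eq_of_lt (mem_range.1 hi), Nat.mod_eq_of_lt (mem_range.1 hj)] at this
  have himage : (range n).image (fun i => r * i % n) = range n :=
    eq_of_subset_of_card_le (fun x hx => by
      obtain ⟨i, -, rfl⟩ := mem_image.1 hx; exact mem_range.2 (Nat.mod_lt _ hn))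
      (card_image_of_injOn hinj).ge
  calc ∏ i ∈ range n, f (r * i) = ∏ i ∈ range n, f (r * i % n) := by
        simp only [hf.map_mod_nat]
    _ = ∏ i ∈ range n, f i := by rw [← prod_image hinj, himage]

theorem ncard_image_mul_eq_of_ncard_fiber {α β : Type*} {s : Set α} (hs : s.Finite)
    {f : α → β} {k : ℕ} (h : ∀ a ∈ s, {x ∈ s | f x = f a}.ncard = k) :
    (f '' s).ncard * k = s.ncard := by
  classical
  obtain ⟨t, rfl⟩ := hs.exists_finset_coe
  rw [← coe_image, Set.ncard_coe_finset, Set.ncard_coe_finset, card_eq_sum_card_image f t,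
    ← smul_eq_mul, ← sum_const]
  refine sum_congr rfl fun b hb => ?_
  obtain ⟨a, ha, rfl⟩ := mem_image.1 hb
  rw [← h a ha, ← Set.ncard_coe_finset, coe_filter]
  rfl

section HilbertNinety

variable {K : Type*} [Field K] [Fintype K] {q n r : ℕ}

theorem exists_pow_mul_eq_self_of_prod_eq_one (hK : Fintype.card K = q ^ n)
    (hrn : r.Coprime n) {a : K} (ha : ∏ i ∈ range n, a ^ (q ^ r) ^ i = 1) :
    ∃ c ≠ 0, c ^ q ^ r * a = c := by
  have hq := one_lt_of_card_eq_pow hK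
  have hn := ne_zero_of_card_eq_pow hK
  have ha0 : a ≠ 0 := by
    rintro rfl
    rw [prod_eq_zero (mem_range.2 (Nat.pos_of_ne_zero hn)) (by simp)] at ha
    exact zero_ne_one ha
  have hunit (u : Kˣ) : u ^ q ^ n = u := Units.ext (by simpa using pow_pow_card_eq_self hK _)
  let τ : Kˣ →* Kˣ := powMonoidHom (q ^ r)
  have hiter (i : ℕ) (u : Kˣ) : τ^[i] u = u ^ (q ^ r) ^ i :=
    congrFun (pow_iterate (q ^ r) i) u
  have hnorm (u : Kˣ) : ∏ i ∈ range n, τ^[i] u = u ^ ∑ j ∈ range n, q ^ j := by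
    simp only [hiter, ← pow_mul]
    rw [(periodic_pow_pow (hunit u)).prod_range_mul_left hrn, prod_pow_eq_pow_sum]
  have hgeom : (q - 1) * ∑ j ∈ range n, q ^ j = q ^ n - 1 := by
    rw [Nat.geomSum_eq hq, Nat.mul_div_cancel']
    simpa using Nat.sub_dvd_pow_sub_pow q 1 n
  have : NeZero (q - 1) := ⟨by omega⟩
  have : NeZero (∑ j ∈ range n, q ^ j) :=
    ⟨(sum_pos (fun j _ => by positivity) (nonempty_range_iff.2 hn)).ne'⟩
  have hfix : {u | τ u = u}.ncard ≤ q - 1 := ncard_le_of_forall_pow_eq_one fun u hu => by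
    have hu1 : u ^ q = u := pow_eq_self_of_pow_pow_eq_self hu (hunit u) hrn
    rw [← mul_left_cancel_iff (a := u), ← pow_succ', Nat.sub_add_cancel hq.le, hu1, mul_one]
  have hker : {u | ∏ i ∈ range n, τ^[i] u = 1}.ncard ≤ ∑ j ∈ range n, q ^ j :=
    ncard_le_of_forall_pow_eq_one fun u hu => (hnorm u).symm.trans hu
  obtain ⟨c, hc⟩ := exists_div_apply_eq_of_prod_iterate_eq_one τ
    (fun u => by
      rw [hiter, ← pow_mul, mul_comm, pow_mul]
      exact pow_pow_eq_self_of_pow_eq_self (hunit u) r)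
    ((Nat.mul_le_mul hfix hker).trans (by
      rw [hgeom, Nat.card_units, Nat.card_eq_fintype_card, hK]))
    (a := Units.mk0 a ha0) (Units.ext (by simpa [hiter] using ha))
  refine ⟨c, c.ne_zero, ?_⟩
  rw [div_eq_iff_eq_mul] at hc
  simpa [τ, mul_comm] using (congrArg Units.val hc).symm

theorem exists_sub_pow_eq_of_sum_eq_zero (hK : Fintype.card K = q ^ n) (hrn : r.Coprime n)
    {b : K} (hb : ∑ i ∈ range n, b ^ (q ^ r) ^ i = 0) : ∃ d, d - d ^ q ^ r = b := by
  have hq := one_lt_of_card_eq_pow hK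
  have hn := ne_zero_of_card_eq_pow hK
  obtain ⟨τ, hτ⟩ := exists_ringHom_eq_pow_pow hK r
  have hiter (i : ℕ) (x : K) : τ^[i] x = x ^ (q ^ r) ^ i := by
    rw [show ⇑τ = (· ^ q ^ r) from funext hτ, pow_iterate]
  have htrace (x : K) : ∑ i ∈ range n, τ^[i] x = ∑ j ∈ range n, x ^ q ^ j := by
    simp only [hiter, ← pow_mul]
    exact (periodic_pow_pow (pow_pow_card_eq_self hK x)).sum_range_mul_left hrn
  have hfix : {x | τ x = x}.ncard ≤ q :=
    (Set.ncard_le_ncard fun x (hx : τ x = x) => show x ^ q = x from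
      pow_eq_self_of_pow_pow_eq_self ((hτ x).symm.trans hx) (pow_pow_card_eq_self hK x) hrn
      ).trans (ncard_setOf_pow_eq_self_le hq)
  have hker : {x | ∑ i ∈ range n, τ^[i] x = 0}.ncard ≤ q ^ (n - 1) := by
    simpa only [htrace] using ncard_setOf_sum_pow_pow_eq_zero_le (F := K) hq hn
  obtain ⟨d, hd⟩ := exists_sub_apply_eq_of_sum_iterate_eq_zero τ.toAddMonoidHom
    (fun x => by
      show τ^[n] x = x
      rw [hiter, ← pow_mul, mul_comm, pow_mul]
      exact pow_pow_eq_self_of_pow_eq_self (pow_pow_card_eq_self hK x) r)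
    ((Nat.mul_le_mul hfix hker).trans (by
      rw [← pow_succ', Nat.sub_add_cancel (Nat.pos_of_ne_zero hn), Nat.card_eq_fintype_card,
        hK]))
    (a := b) (by simpa [hiter] using hb)
  exact ⟨d, by simpa [hτ] using hd⟩

end HilbertNinety

section Affine

variable {K L : Type*} [Field K] [Field L] [Algebra K L]

theorem mem_affineSet_self (α : L) : α ∈ affineSet K α :=
  ⟨1, 0, one_ne_zero, by simp⟩

theorem affineSet_affine_eq {c : K} (hc : c ≠ 0) (d : K) (α : L) :
    affineSet K (algebraMap K L c * α + algebraMap K L d) = affineSet K α := by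
  ext y
  constructor
  · rintro ⟨a, b, ha, rfl⟩
    exact ⟨a * c, a * d + b, mul_ne_zero ha hc, by simp only [map_mul, map_add]; ring⟩
  · rintro ⟨a, b, ha, rfl⟩
    refine ⟨a / c, b - a / c * d, div_ne_zero ha hc, ?_⟩
    have hc' : algebraMap K L c ≠ 0 := (_root_.map_ne_zero _).2 hc
    simp only [map_sub, map_mul, map_div₀]
    field_simp
    ring

theorem affineSet_eq_of_mem {α β : L} (h : β ∈ affineSet K α) :
    affineSet K β = affineSet K α := by
  obtain ⟨a, b, ha, rfl⟩ := h
  exact affineSet_affine_eq ha b α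

theorem mem_range_of_mem_affineSet {α β : L} (h : β ∈ affineSet K α)
    (hα : α ∈ Set.range (algebraMap K L)) : β ∈ Set.range (algebraMap K L) := by
  obtain ⟨a, b, -, rfl⟩ := h
  obtain ⟨x, rfl⟩ := hα
  exact ⟨a * x + b, by simp⟩

theorem affine_injective {α : L} (hα : α ∉ Set.range (algebraMap K L)) :
    Injective fun ab : K × K => algebraMap K L ab.1 * α + algebraMap K L ab.2 := by
  rintro ⟨a, b⟩ ⟨a', b'⟩ h
  simp only at h
  obtain rfl : a = a' := by
    by_contra hne
    have hne' : algebraMap K L a - algebraMap K L a' ≠ 0 := by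
      rwa [sub_ne_zero, (algebraMap K L).injective.ne_iff]
    refine hα ⟨(b' - b) / (a - a'), ?_⟩
    rw [map_div₀, map_sub, map_sub, div_eq_iff hne']
    linear_combination -h
  simpa using h

theorem image_affineSet {φ : L →+* L} {ψ : K →+* K} (hψ : Surjective ψ)
    (hφψ : ∀ a, φ (algebraMap K L a) = algebraMap K L (ψ a)) (α : L) :
    φ '' affineSet K α = affineSet K (φ α) := by
  ext y
  constructor
  · rintro ⟨_, ⟨a, b, ha, rfl⟩, rfl⟩
    exact ⟨ψ a, ψ b, (_root_.map_ne_zero ψ).2 ha, by simp [hφψ]⟩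
  · rintro ⟨a, b, ha, rfl⟩
    obtain ⟨a, rfl⟩ := hψ a
    obtain ⟨b, rfl⟩ := hψ b
    exact ⟨_, ⟨a, b, (_root_.map_ne_zero ψ).1 ha, rfl⟩, by simp [hφψ]⟩

theorem natDegree_minpoly_eq_finrank_iff [FiniteDimensional K L]
    (h : (Module.finrank K L).Prime) {α : L} :
    (minpoly K α).natDegree = Module.finrank K L ↔ α ∉ Set.range (algebraMap K L) := by
  rw [← RingHom.coe_range, SetLike.mem_coe, ← minpoly.natDegree_eq_one_iff]
  constructor
  · intro hr h1
    exact h.one_lt.ne' (hr.symm.trans h1)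
  · intro h1
    exact (h.eq_one_or_self_of_dvd _
      (minpoly.degree_dvd (IsIntegral.of_finite K α))).resolve_left h1

theorem prod_iterate_eq_one_of_apply_eq {φ : L →+* L} {ψ : K →+* K}
    (hφψ : ∀ a, φ (algebraMap K L a) = algebraMap K L (ψ a)) {α : L}
    (hα : α ∉ Set.range (algebraMap K L)) {n : ℕ} (hn : φ^[n] α = α) {a b : K}
    (h : φ α = algebraMap K L a * α + algebraMap K L b) :
    ∏ i ∈ range n, ψ^[i] a = 1 := by
  have hiter (j : ℕ) : ∃ s : K,
      φ^[j] α = algebraMap K L (∏ i ∈ range j, ψ^[i] a) * α + algebraMap K L s := by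
    induction j with
    | zero => exact ⟨0, by simp⟩
    | succ j ih =>
      obtain ⟨s, hs⟩ := ih
      refine ⟨ψ (∏ i ∈ range j, ψ^[i] a) * b + ψ s, ?_⟩
      have hprod : ∏ i ∈ range (j + 1), ψ^[i] a = ψ (∏ i ∈ range j, ψ^[i] a) * a := by
        simp [prod_range_succ', map_prod, iterate_succ_apply']
      rw [iterate_succ_apply', hs, map_add, map_mul, hφψ, hφψ, h, hprod]
      simp only [map_add, map_mul]
      ring
  obtain ⟨s, hs⟩ := hiter n
  rw [hn] at hs
  have h1 := affine_injective hα (a₁ := (1, 0)) (a₂ := (∏ i ∈ range n, ψ^[i] a, s))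
    (by simp only [map_one, map_zero, one_mul, add_zero]; exact hs)
  exact (congrArg Prod.fst h1).symm

theorem sum_iterate_eq_zero_of_apply_eq {φ : L →+* L} {ψ : K →+* K}
    (hφψ : ∀ a, φ (algebraMap K L a) = algebraMap K L (ψ a)) {α : L} {n : ℕ}
    (hn : φ^[n] α = α) {b : K} (h : φ α = α + algebraMap K L b) :
    ∑ i ∈ range n, ψ^[i] b = 0 := by
  have hsemi : Semiconj (algebraMap K L) ψ φ := fun a => (hφψ a).symm
  apply (algebraMap K L).injective
  calc algebraMap K L (∑ i ∈ range n, ψ^[i] b)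
        = ∑ i ∈ range n, (φ^[i + 1] α - φ^[i] α) := by
        rw [map_sum]
        refine sum_congr rfl fun i _ => ?_
        rw [hsemi.iterate_right i b, eq_sub_of_add_eq' h.symm, iterate_map_sub,
          iterate_succ_apply]
    _ = algebraMap K L 0 := by
        rw [sum_range_sub (fun i => φ^[i] α), hn, iterate_zero_apply, sub_self, map_zero]

end Affine

section Extension

variable {K L : Type*} [Field K] [Field L] [Algebra K L] {q n r : ℕ}

theorem range_algebraMap_eq_setOf_pow_pow_eq_self [Fintype K] [Finite L]
    (hK : Fintype.card K = q ^ n) :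
    Set.range (algebraMap K L) = {x : L | x ^ q ^ n = x} := by
  refine Set.eq_of_subset_of_ncard_le ?_ ?_
  · rintro _ ⟨a, rfl⟩
    rw [Set.mem_ofPred_eq, ← map_pow, pow_pow_card_eq_self hK]
  · rw [Set.ncard_range_of_injective (algebraMap K L).injective, Nat.card_eq_fintype_card, hK]
    exact ncard_setOf_pow_eq_self_le (hK ▸ Fintype.one_lt_card)

theorem finrank_eq_of_card_eq [Fintype K] [Fintype L] (hK : Fintype.card K = q ^ n)
    (hL : Fintype.card L = q ^ (n * r)) : Module.finrank K L = r := by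
  have hc := Module.card_eq_pow_finrank (K := K) (V := L)
  rw [hK, hL, ← pow_mul] at hc
  exact (Nat.eq_of_mul_eq_mul_left (Nat.pos_of_ne_zero (ne_zero_of_card_eq_pow hK))
    (Nat.pow_right_injective (one_lt_of_card_eq_pow hK) hc)).symm

theorem affine_pow_pow [Fintype L] {k : ℕ} (hL : Fintype.card L = q ^ k) (m : ℕ) (a b : K)
    (β : L) : (algebraMap K L a * β + algebraMap K L b) ^ q ^ m =
      algebraMap K L (a ^ q ^ m) * β ^ q ^ m + algebraMap K L (b ^ q ^ m) := by
  obtain ⟨φ, hφ⟩ := exists_ringHom_eq_pow_pow hL m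
  simp only [map_pow, ← hφ, map_add, map_mul]

theorem image_pow_pow_affineSet [Fintype K] [Fintype L] {k : ℕ}
    (hK : Fintype.card K = q ^ n) (hL : Fintype.card L = q ^ k) (m : ℕ) (α : L) :
    (fun x : L => x ^ q ^ m) '' affineSet K α = affineSet K (α ^ q ^ m) := by
  obtain ⟨φ, hφ⟩ := exists_ringHom_eq_pow_pow hL m
  obtain ⟨ψ, hψ⟩ := exists_ringHom_eq_pow_pow hK m
  have h := image_affineSet (Finite.surjective_of_injective ψ.injective)
    (fun a => by rw [hφ, hψ, map_pow]) α
  rwa [show ⇑φ = (· ^ q ^ m) from funext hφ] at h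

theorem exists_mem_affineSet_pow_pow_eq_self [Fintype K] [Fintype L]
    (hK : Fintype.card K = q ^ n) (hL : Fintype.card L = q ^ (n * r)) (hrn : r.Coprime n)
    {α : L} (hα : α ∉ Set.range (algebraMap K L)) (hfix : α ^ q ^ r ∈ affineSet K α) :
    ∃ β ∈ affineSet K α, β ^ q ^ r = β := by
  obtain ⟨φ, hφ⟩ := exists_ringHom_eq_pow_pow hL r
  obtain ⟨ψ, hψ⟩ := exists_ringHom_eq_pow_pow hK r
  have hφψ (a : K) : φ (algebraMap K L a) = algebraMap K L (ψ a) := by rw [hφ, hψ, map_pow]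
  have hψiter (i : ℕ) (x : K) : ψ^[i] x = x ^ (q ^ r) ^ i := by
    rw [show ⇑ψ = (· ^ q ^ r) from funext hψ, pow_iterate]
  have hφn (x : L) : φ^[n] x = x := by
    rw [show ⇑φ = (· ^ q ^ r) from funext hφ, pow_iterate, ← pow_mul, mul_comm r n]
    exact pow_pow_card_eq_self hL x
  obtain ⟨a, b, -, hab⟩ := hfix
  rw [← hφ] at hab
  have hnorm := prod_iterate_eq_one_of_apply_eq hφψ hα (hφn α) hab
  simp only [hψiter] at hnorm
  obtain ⟨c, hc0, hc⟩ := exists_pow_mul_eq_self_of_prod_eq_one hK hrn hnorm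
  have hcα : φ (algebraMap K L c * α) =
      algebraMap K L c * α + algebraMap K L (c ^ q ^ r * b) := by
    have hc' : algebraMap K L (c ^ q ^ r) * algebraMap K L a = algebraMap K L c := by
      rw [← map_mul, hc]
    rw [map_mul, hab, hφψ, hψ, map_mul]
    linear_combination α * hc'
  have htrace := sum_iterate_eq_zero_of_apply_eq hφψ (hφn _) hcα
  simp only [hψiter] at htrace
  obtain ⟨d, hd⟩ := exists_sub_pow_eq_of_sum_eq_zero hK hrn htrace
  refine ⟨algebraMap K L c * α + algebraMap K L d, ⟨c, d, hc0, rfl⟩, ?_⟩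
  rw [← hφ, map_add, hcα, hφψ, hψ, ← hd, map_sub]
  ring

theorem fixedAffineSets_eq_image [Fintype K] [Fintype L] (hK : Fintype.card K = q ^ n)
    (hL : Fintype.card L = q ^ (n * r)) (hr : r.Prime) (hrn : r.Coprime n) :
    fixedAffineSets K L r (q ^ r) =
      affineSet K '' ({x : L | x ^ q ^ r = x} \ {x | x ^ q = x}) := by
  have hrange (x : L) : x ∈ Set.range (algebraMap K L) ↔ x ^ q ^ n = x :=
    Set.ext_iff.1 (range_algebraMap_eq_setOf_pow_pow_eq_self hK) x
  have hfinrank := finrank_eq_of_card_eq hK hL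
  have hdeg (α : L) : (minpoly K α).natDegree = r ↔ α ∉ Set.range (algebraMap K L) :=
    hfinrank ▸ natDegree_minpoly_eq_finrank_iff (hfinrank ▸ hr)
  have hfixed (α : L) : (fun x : L => x ^ q ^ r) '' affineSet K α = affineSet K α ↔
      α ^ q ^ r ∈ affineSet K α := by
    rw [image_pow_pow_affineSet hK hL]
    exact ⟨fun h => h ▸ mem_affineSet_self _, affineSet_eq_of_mem⟩
  ext A
  constructor
  · rintro ⟨⟨α, hα, rfl⟩, hA⟩
    rw [hdeg] at hα
    obtain ⟨β, hβα, hβ⟩ :=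
      exists_mem_affineSet_pow_pow_eq_self hK hL hrn hα ((hfixed α).1 hA)
    refine ⟨β, ⟨hβ, fun hβ1 => hα ?_⟩, affineSet_eq_of_mem hβα⟩
    refine mem_range_of_mem_affineSet (affineSet_eq_of_mem hβα ▸ mem_affineSet_self α) ?_
    exact (hrange β).2 (pow_pow_eq_self_of_pow_eq_self hβ1 n)
  · rintro ⟨β, ⟨hβ, hβ1⟩, rfl⟩
    have hβK : β ∉ Set.range (algebraMap K L) := fun h =>
      hβ1 (pow_eq_self_of_pow_pow_eq_self hβ ((hrange β).1 h) hrn)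
    exact ⟨⟨β, (hdeg β).2 hβK, rfl⟩, (hfixed β).2 (hβ.symm ▸ mem_affineSet_self β)⟩

theorem ncard_fiber_affineSet [Fintype K] [Fintype L] (hK : Fintype.card K = q ^ n)
    (hL : Fintype.card L = q ^ (n * r)) (hrn : r.Coprime n) {β : L}
    (hβ : β ∈ {x : L | x ^ q ^ r = x} \ {x | x ^ q = x}) :
    {x ∈ {x : L | x ^ q ^ r = x} \ {x | x ^ q = x} | affineSet K x = affineSet K β}.ncard =
      q * (q - 1) := by
  obtain ⟨hβr, hβ1⟩ := hβ
  have hq := one_lt_of_card_eq_pow hK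
  have hβK : β ∉ Set.range (algebraMap K L) := fun h => hβ1 <|
    pow_eq_self_of_pow_pow_eq_self hβr
      ((Set.ext_iff.1 (range_algebraMap_eq_setOf_pow_pow_eq_self hK) β).1 h) hrn
  have hfixK : {a : K | a ^ q = a}.ncard = q := ncard_setOf_pow_eq_self hq (by
    rw [Nat.card_eq_fintype_card, hK]; simpa using Nat.sub_dvd_pow_sub_pow q 1 n)
  have hfiber : {x ∈ {x : L | x ^ q ^ r = x} \ {x | x ^ q = x} |
      affineSet K x = affineSet K β} = (fun ab : K × K => algebraMap K L ab.1 * β +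
        algebraMap K L ab.2) '' (({a : K | a ^ q = a} \ {0}) ×ˢ {a : K | a ^ q = a}) := by
    ext x
    constructor
    · rintro ⟨⟨hxr, -⟩, hxβ⟩
      obtain ⟨a, b, ha, rfl⟩ : x ∈ affineSet K β := hxβ ▸ mem_affineSet_self x
      rw [Set.mem_ofPred_eq, affine_pow_pow hL, hβr] at hxr
      obtain ⟨har, hbr⟩ := Prod.ext_iff.1
        (affine_injective hβK (a₁ := (a ^ q ^ r, b ^ q ^ r)) (a₂ := (a, b)) hxr)
      exact ⟨(a, b),
        ⟨⟨pow_eq_self_of_pow_pow_eq_self har (pow_pow_card_eq_self hK a) hrn, ha⟩,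
          pow_eq_self_of_pow_pow_eq_self hbr (pow_pow_card_eq_self hK b) hrn⟩, rfl⟩
    · rintro ⟨⟨a, b⟩, ⟨⟨ha : a ^ q = a, ha0 : a ≠ 0⟩, hb : b ^ q = b⟩, rfl⟩
      refine ⟨⟨?_, fun hx1 => hβ1 ?_⟩, affineSet_affine_eq ha0 b β⟩
      · rw [Set.mem_ofPred_eq, affine_pow_pow hL, hβr, pow_pow_eq_self_of_pow_eq_self ha,
          pow_pow_eq_self_of_pow_eq_self hb]
      · have hσ := affine_pow_pow hL 1 a b β
        simp only [pow_one] at hσ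
        rw [Set.mem_ofPred_eq, hσ, ha, hb] at hx1
        exact mul_left_cancel₀ ((_root_.map_ne_zero _).2 ha0) (add_right_cancel hx1)
  rw [hfiber, (affine_injective hβK).injOn.ncard_image, Set.ncard_prod,
    Set.ncard_sdiff_singleton_of_mem
      (show (0 : K) ∈ {a : K | a ^ q = a} from zero_pow (by omega)), hfixK, mul_comm]

theorem ncard_fixedAffineSets [Fintype K] [Fintype L] (hK : Fintype.card K = q ^ n)
    (hL : Fintype.card L = q ^ (n * r)) (hr : r.Prime) (hrn : r.Coprime n) :
    (fixedAffineSets K L r (q ^ r)).ncard = (q ^ (r - 1) - 1) / (q - 1) := by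
  have hq := one_lt_of_card_eq_pow hK
  have hcard {m : ℕ} (hm0 : m ≠ 0) (hm : m ∣ n * r) :
      {x : L | x ^ q ^ m = x}.ncard = q ^ m := by
    refine ncard_setOf_pow_eq_self (Nat.one_lt_pow hm0 hq) ?_
    obtain ⟨k, hk⟩ := hm
    rw [Nat.card_eq_fintype_card, hL, hk, pow_mul]
    simpa using Nat.sub_dvd_pow_sub_pow (q ^ m) 1 k
  have hD : ({x : L | x ^ q ^ r = x} \ {x | x ^ q = x}).ncard = q ^ r - q := by
    have hsub : {x : L | x ^ q = x} ⊆ {x | x ^ q ^ r = x} := fun x hx =>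
      pow_pow_eq_self_of_pow_eq_self hx r
    have hF : {x : L | x ^ q = x}.ncard = q := by simpa using hcard one_ne_zero (one_dvd _)
    rw [Set.ncard_sdiff hsub, hcard hr.ne_zero (dvd_mul_left r n), hF]
  have hcount := ncard_image_mul_eq_of_ncard_fiber (Set.toFinite _)
    fun β hβ => ncard_fiber_affineSet hK hL hrn hβ
  rw [hD] at hcount
  have hsplit : q ^ r - q = (q ^ (r - 1) - 1) / (q - 1) * (q * (q - 1)) := by
    have hdvd : q - 1 ∣ q ^ (r - 1) - 1 := by simpa using Nat.sub_dvd_pow_sub_pow q 1 (r - 1)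
    rw [mul_comm q, ← mul_assoc, Nat.div_mul_cancel hdvd, Nat.sub_mul, one_mul, ← pow_succ,
      Nat.sub_add_cancel hr.one_le]
  rw [fixedAffineSets_eq_image hK hL hr hrn]
  exact Nat.eq_of_mul_eq_mul_right (Nat.mul_pos (by omega) (by omega)) (hcount.trans hsplit)

end Extension

theorem count_fixed_affineSets_sigma_pow_r_distinct_primes_general
    (p t n r : ℕ) (hn : n.Prime) (hr : r.Prime)
    (hnr : n ≠ r)
    (K L : Type*) [Field K] [Field L] [Algebra K L] [Fintype K] [Fintype L]
    (hK : Fintype.card K = (p ^ t) ^ n) (hL : Fintype.card L = (p ^ t) ^ (n * r)) :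
    (fixedAffineSets K L r ((p ^ t) ^ r)).ncard =
      ((p ^ t) ^ (r - 1) - 1) / (p ^ t - 1) :=
  ncard_fixedAffineSets hK hL hr ((Nat.coprime_primes hr hn).2 hnr.symm)

/-- Let `n` and `r` be distinct primes with `r > 2` and `S = S(n, r)`.
The number of affine sets in `𝔸` fixed under `σ^r` (pointwise image), where `σ : x ↦ x ^ q`
with `q = p ^ t`, is `(q^{r-1} - 1)/(q - 1)`. -/
theorem count_fixed_affineSets_sigma_pow_r_distinct_primes
    (p t n r : ℕ) (hp : p.Prime) (ht : 0 < t) (hn : n.Prime) (hr : r.Prime)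
    (hnr : n ≠ r) (hr2 : 2 < r)
    (K L : Type*) [Field K] [Field L] [Algebra K L] [Fintype K] [Fintype L]
    (hK : Fintype.card K = (p ^ t) ^ n) (hL : Fintype.card L = (p ^ t) ^ (n * r)) :
    (fixedAffineSets K L r ((p ^ t) ^ r)).ncard =
      ((p ^ t) ^ (r - 1) - 1) / (p ^ t - 1) :=
  count_fixed_affineSets_sigma_pow_r_distinct_primes_general p t n r hn hr hnr K L hK hL
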